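/- arXiv:1006.0205 — 2 statements merged into one kernel-verified Lean document; each statement's English description precedes it below -/
import Mathlib

section
/- Let A and B be finite nonempty sets, let a : A → ℂ and b : B → ℂ satisfy |a(m)| ≤ 1 for all m ∈ A and |b(n)| ≤ 1 for all n ∈ B, and let g : A × B → ℂ be arbitrary. Then |E_{m∈A} E_{n∈B} a(m)·b(n)·g(m,n)|⁴ ≤ E_{n∈B} E_{n'∈B} |E_{m∈A} g(m,n)·conj(g(m,n'))|². -/
open scoped BigOperators

/-- The average `(1/|s|) Σ_{x ∈ s} f(x)` of a complex-valued function over a finite set. -/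
noncomputable def cexp {α : Type*} (s : Finset α) (f : α → ℂ) : ℂ :=
  (∑ x ∈ s, f x) / (s.card : ℂ)

/-- The average `(1/|s|) Σ_{x ∈ s} f(x)` of a real-valued function over a finite set. -/
noncomputable def rexp {α : Type*} (s : Finset α) (f : α → ℝ) : ℝ :=
  (∑ x ∈ s, f x) / (s.card : ℝ)

/-- Double Cauchy–Schwarz: for `1`-bounded `a` on `A` and `b` on `B` and arbitrary `g`,
`|𝔼_{m∈A} 𝔼_{n∈B} a(m)b(n)g(m,n)|⁴ ≤ 𝔼_{n,n'∈B} |𝔼_{m∈A} g(m,n) conj(g(m,n'))|²`. -/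
theorem double_cauchy_schwarz {α β : Type*} (A : Finset α) (B : Finset β)
    (hA : A.Nonempty) (hB : B.Nonempty)
    (a : α → ℂ) (b : β → ℂ)
    (ha : ∀ m ∈ A, ‖a m‖ ≤ 1) (hb : ∀ n ∈ B, ‖b n‖ ≤ 1)
    (g : α → β → ℂ) :
    ‖cexp A fun m => cexp B fun n => a m * b n * g m n‖ ^ (4 : ℕ) ≤
      rexp B fun n => rexp B fun n' =>
        ‖cexp A fun m => g m n * (starRingEnd ℂ) (g m n')‖ ^ (2 : ℕ) := by
  classical
  set N : ℝ := (A.card : ℝ) with hNdef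
  set M : ℝ := (B.card : ℝ) with hMdef
  have hN : 0 < N := by rw [hNdef]; exact_mod_cast Finset.card_pos.mpr hA
  have hM : 0 < M := by rw [hMdef]; exact_mod_cast Finset.card_pos.mpr hB
  set c : β → β → ℂ := fun n n' => ∑ m ∈ A, g m n * (starRingEnd ℂ) (g m n') with hc
  set inn : α → ℂ := fun m => ∑ n ∈ B, b n * g m n with hinn
  set S : ℂ := ∑ m ∈ A, ∑ n ∈ B, a m * b n * g m n with hS
  set Q : ℝ := ∑ n ∈ B, ∑ n' ∈ B, ‖c n n'‖ ^ 2 with hQ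
  set T : ℝ := ∑ n ∈ B, ∑ n' ∈ B, ‖c n n'‖ with hT
  have hQ0 : 0 ≤ Q := Finset.sum_nonneg fun _ _ => Finset.sum_nonneg fun _ _ => sq_nonneg _
  -- Step 1: |S| ≤ ∑_m |inn m|
  have h1 : ‖S‖ ≤ ∑ m ∈ A, ‖inn m‖ := by
    calc ‖S‖ ≤ ∑ m ∈ A, ‖∑ n ∈ B, a m * b n * g m n‖ :=
          norm_sum_le _ _
      _ ≤ ∑ m ∈ A, ‖inn m‖ := by
          refine Finset.sum_le_sum fun m hm => ?_
          have : (∑ n ∈ B, a m * b n * g m n) = a m * inn m := by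
            rw [hinn, Finset.mul_sum]
            exact Finset.sum_congr rfl fun n _ => by ring
          rw [this, norm_mul]
          exact mul_le_of_le_one_left (norm_nonneg _) (ha m hm)
  -- Step 2: Cauchy-Schwarz over A
  have h2 : (∑ m ∈ A, ‖inn m‖) ^ 2 ≤ N * ∑ m ∈ A, ‖inn m‖ ^ 2 := by
    have := sq_sum_le_card_mul_sum_sq (s := A) (f := fun m => ‖inn m‖)
    exact_mod_cast this
  -- Step 3: expand and bound using |b| ≤ 1
  have expand : (∑ m ∈ A, inn m * (starRingEnd ℂ) (inn m))
      = ∑ n ∈ B, ∑ n' ∈ B, (b n * (starRingEnd ℂ) (b n')) * c n n' := by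
    have step : ∀ m : α, inn m * (starRingEnd ℂ) (inn m)
        = ∑ n ∈ B, ∑ n' ∈ B, (b n * (starRingEnd ℂ) (b n')) *
            (g m n * (starRingEnd ℂ) (g m n')) := by
      intro m
      rw [hinn]
      simp only [map_sum, map_mul, Finset.sum_mul_sum]
      exact Finset.sum_congr rfl fun n _ => Finset.sum_congr rfl fun n' _ => by ring
    simp only [step, hc]
    rw [Finset.sum_comm]
    refine Finset.sum_congr rfl fun n _ => ?_
    rw [Finset.sum_comm]
    refine Finset.sum_congr rfl fun n' _ => ?_
    rw [Finset.mul_sum]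
  have hcast : ((∑ m ∈ A, ‖inn m‖ ^ 2 : ℝ) : ℂ)
      = ∑ n ∈ B, ∑ n' ∈ B, (b n * (starRingEnd ℂ) (b n')) * c n n' := by
    rw [← expand]
    push_cast [Complex.sq_norm]
    exact Finset.sum_congr rfl fun m _ => (Complex.mul_conj _).symm
  have h3 : (∑ m ∈ A, ‖inn m‖ ^ 2) ≤ T := by
    have nn : (0:ℝ) ≤ ∑ m ∈ A, ‖inn m‖ ^ 2 :=
      Finset.sum_nonneg fun _ _ => sq_nonneg _
    calc (∑ m ∈ A, ‖inn m‖ ^ 2)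
        = ‖((∑ m ∈ A, ‖inn m‖ ^ 2 : ℝ) : ℂ)‖ := by
          rw [Complex.norm_real, Real.norm_of_nonneg nn]
      _ = ‖∑ n ∈ B, ∑ n' ∈ B, (b n * (starRingEnd ℂ) (b n')) * c n n'‖ := by
          rw [hcast]
      _ ≤ ∑ n ∈ B, ∑ n' ∈ B, ‖(b n * (starRingEnd ℂ) (b n')) * c n n'‖ :=
          (norm_sum_le _ _).trans
            (Finset.sum_le_sum fun n _ => norm_sum_le _ _)
      _ ≤ T := by
          refine Finset.sum_le_sum fun n hn => Finset.sum_le_sum fun n' hn' => ?_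
          rw [norm_mul, norm_mul, Complex.norm_conj]
          have c0 : 0 ≤ ‖c n n'‖ := norm_nonneg _
          have hbb : ‖b n‖ * ‖b n'‖ ≤ 1 :=
            mul_le_one₀ (hb n hn) (norm_nonneg _) (hb n' hn')
          exact mul_le_of_le_one_left c0 hbb
  -- Step 4: T^2 ≤ M^2 * Q
  have h4 : T ^ 2 ≤ M ^ 2 * Q := by
    have hTn : T ^ 2 ≤ M * ∑ n ∈ B, (∑ n' ∈ B, ‖c n n'‖) ^ 2 := by
      have := sq_sum_le_card_mul_sum_sq (s := B)
        (f := fun n => ∑ n' ∈ B, ‖c n n'‖)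
      exact_mod_cast this
    have hin : ∀ n ∈ B, (∑ n' ∈ B, ‖c n n'‖) ^ 2
        ≤ M * ∑ n' ∈ B, ‖c n n'‖ ^ 2 := fun n _ => by
      have := sq_sum_le_card_mul_sum_sq (s := B) (f := fun n' => ‖c n n'‖)
      exact_mod_cast this
    calc T ^ 2 ≤ M * ∑ n ∈ B, (∑ n' ∈ B, ‖c n n'‖) ^ 2 := hTn
      _ ≤ M * ∑ n ∈ B, (M * ∑ n' ∈ B, ‖c n n'‖ ^ 2) :=
          mul_le_mul_of_nonneg_left (Finset.sum_le_sum hin) hM.le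
      _ = M ^ 2 * Q := by rw [← Finset.mul_sum]; ring
  -- Main bound on sums
  have main : ‖S‖ ^ 4 ≤ N ^ 2 * M ^ 2 * Q := by
    have hS2 : ‖S‖ ^ 2 ≤ N * T := by
      calc ‖S‖ ^ 2 ≤ (∑ m ∈ A, ‖inn m‖) ^ 2 :=
            pow_le_pow_left₀ (norm_nonneg _) h1 2
        _ ≤ N * ∑ m ∈ A, ‖inn m‖ ^ 2 := h2
        _ ≤ N * T := mul_le_mul_of_nonneg_left h3 hN.le
    have hs0 : (0:ℝ) ≤ ‖S‖ ^ 2 := sq_nonneg _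
    calc ‖S‖ ^ 4 = (‖S‖ ^ 2) ^ 2 := by ring
      _ ≤ (N * T) ^ 2 := pow_le_pow_left₀ hs0 hS2 2
      _ = N ^ 2 * T ^ 2 := by ring
      _ ≤ N ^ 2 * (M ^ 2 * Q) := mul_le_mul_of_nonneg_left h4 (by positivity)
      _ = N ^ 2 * M ^ 2 * Q := by ring
  -- Unfold averages
  have lhs_eq : ‖cexp A fun m => cexp B fun n => a m * b n * g m n‖
      = ‖S‖ / (N * M) := by
    unfold cexp
    rw [← Finset.sum_div, ← hS, div_div, norm_div, norm_mul]
    simp only [Complex.norm_natCast]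
    rw [hNdef, hMdef]
    ring
  have rhs_eq : (rexp B fun n => rexp B fun n' =>
        ‖cexp A fun m => g m n * (starRingEnd ℂ) (g m n')‖ ^ (2 : ℕ))
      = Q / (N ^ 2 * M ^ 2) := by
    rw [hQ]
    unfold rexp cexp
    simp only [hc, norm_div, Complex.norm_natCast, div_pow, ← hNdef, ← hMdef]
    simp only [← Finset.sum_div, div_div]
    congr 1
    ring
  rw [lhs_eq, rhs_eq]
  rw [div_pow, div_le_div_iff₀ (by positivity) (by positivity)]
  calc ‖S‖ ^ 4 * (N ^ 2 * M ^ 2)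
      ≤ (N ^ 2 * M ^ 2 * Q) * (N ^ 2 * M ^ 2) :=
        mul_le_mul_of_nonneg_right main (by positivity)
    _ = Q * (N * M) ^ 4 := by ring
end

section
/- Let (χ_h)_{h∈ℤ} be a family of functions χ_h : ℤ → ℂ with |χ_h(n)| = 1 for all h, n ∈ ℤ, and suppose that χ_{h₁}(n)·χ_{h₂}(n+h₁−h₄) = χ_{h₃}(n)·χ_{h₄}(n+h₁−h₄) for all n ∈ ℤ and all h₁, h₂, h₃, h₄ ∈ ℤ with h₁ + h₂ = h₃ + h₄. Define θ(n) := χ_n(0) and θ'(n) := χ_n(0)·conj(χ_0(n)). Then χ_h(n) = θ(n+h)·conj(θ'(n)) for all h, n ∈ ℤ. -/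
/-- If a family of unit-magnitude functions `χ_h : ℤ → ℂ` satisfies the exact quadruple
identity `χ_{h₁}(n)·χ_{h₂}(n+h₁−h₄) = χ_{h₃}(n)·χ_{h₄}(n+h₁−h₄)` for all additive quadruples
`h₁+h₂ = h₃+h₄`, then setting `θ(n) := χ_n(0)` and `θ'(n) := χ_n(0)·conj(χ_0(n))` one has the
coboundary representation `χ_h(n) = θ(n+h)·conj(θ'(n))`. -/
theorem coboundary_of_quadruple_identity (χ : ℤ → ℤ → ℂ)
    (hunit : ∀ h n : ℤ, ‖χ h n‖ = 1)
    (hquad : ∀ n h₁ h₂ h₃ h₄ : ℤ, h₁ + h₂ = h₃ + h₄ →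
      χ h₁ n * χ h₂ (n + h₁ - h₄) = χ h₃ n * χ h₄ (n + h₁ - h₄))
    (θ θ' : ℤ → ℂ) (hθ : ∀ n : ℤ, θ n = χ n 0)
    (hθ' : ∀ n : ℤ, θ' n = χ n 0 * (starRingEnd ℂ) (χ 0 n)) :
    ∀ h n : ℤ, χ h n = θ (n + h) * (starRingEnd ℂ) (θ' n) := by
  intro h n
  have key := hquad n h n 0 (n + h) (by ring)
  simp only [sub_self] at key
  have hne : χ n 0 ≠ 0 := by
    intro h0
    have := hunit n 0
    rw [h0] at this
    simp at this
  have hconj : (starRingEnd ℂ) (χ n 0) * χ n 0 = 1 := by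
    rw [mul_comm, Complex.mul_conj, Complex.normSq_eq_norm_sq, hunit]
    norm_num
  rw [hθ, hθ']
  simp only [map_mul, Complex.conj_conj]
  have : χ h n * χ n 0 = χ (n + h) 0 * ((starRingEnd ℂ) (χ n 0) * χ 0 n) * χ n 0 := by
    rw [key]
    calc χ 0 n * χ (n + h) 0
        = χ (n + h) 0 * χ 0 n * ((starRingEnd ℂ) (χ n 0) * χ n 0) := by
          rw [hconj]; ring
      _ = χ (n + h) 0 * ((starRingEnd ℂ) (χ n 0) * χ 0 n) * χ n 0 := by ring
  exact mul_right_cancel₀ hne this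
end
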